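/- arXiv:2512.17458 — 5 statements merged into one kernel-verified Lean document; each statement's English description precedes it below -/
import Mathlib

section
/- Let n ≥ 2 and let w_k ∈ L_n (k ∈ ℕ) be the elementary wheel polynomials, defined as the coefficients of the formal power series W(T) = ∏_{i=1}^n (1 − x_i^{-1}T) · (∏_{i=1}^n (1 − x_i T))^{-1} over L_n. Then every w_k is a symmetric Laurent polynomial (invariant under the action of S_n permuting the variables), and w_k satisfies the wheel condition: for every tuple c = (c_1,…,c_n) of nonzero complex numbers with c_2 = c_1^{-1}, the evaluation of w_k at c equals the evaluation of w_k at the tuple obtained from c by replacing both c_1 and c_2 with 1. -/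
open scoped BigOperators
noncomputable section

abbrev L (n : ℕ) : Type := AddMonoidAlgebra ℂ (Fin n →₀ ℤ)

/-- The Laurent monomial `x_i ^ k` in `L n`. -/
def xpow {n : ℕ} (i : Fin n) (k : ℤ) : L n :=
  AddMonoidAlgebra.single (Finsupp.single i k) (1 : ℂ)

/-- The monoid homomorphism underlying evaluation at a tuple of nonzero complex numbers. -/
def evalMonoidHom {n : ℕ} (c : Fin n → ℂˣ) :
    Multiplicative (Fin n →₀ ℤ) →* ℂ where
  toFun m := ∏ i : Fin n, ((c i : ℂ) ^ (Multiplicative.toAdd m i))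
  map_one' := by simp
  map_mul' a b := by
    simp only [toAdd_mul, Finsupp.add_apply]
    rw [← Finset.prod_mul_distrib]
    exact Finset.prod_congr rfl fun i _ => zpow_add₀ (Units.ne_zero (c i)) _ _

/-- Evaluation of a Laurent polynomial at a tuple of nonzero complex numbers:
the `ℂ`-algebra map sending `x i` to `c i`. -/
def evalAt {n : ℕ} (c : Fin n → ℂˣ) : L n →ₐ[ℂ] ℂ :=
  AddMonoidAlgebra.lift ℂ ℂ (Fin n →₀ ℤ) (evalMonoidHom c)

/-- The action of a permutation `σ ∈ S_n` on `L n` permuting the variables. -/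
def permAlg {n : ℕ} (σ : Equiv.Perm (Fin n)) : L n ≃ₐ[ℂ] L n :=
  AddMonoidAlgebra.domCongr ℂ ℂ (Finsupp.domCongr σ)

open PowerSeries

/-
Evaluated at a point, `W` is the quotient `∏ (1 - c_i⁻¹ T) / ∏ (1 - c_i T)` in `ℂ⟦T⟧`. When
`c₂ = c₁⁻¹` the factors `(1 - c₁ T)(1 - c₁⁻¹ T)` of numerator and denominator coincide and
cancel, exactly as the factors `(1 - T)²` do after `c₁, c₂` are replaced by `1`; both
evaluations are then the same quotient over the remaining variables. Symmetry holds because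
permuting the variables only reorders both products, and the quotient is unique since the
denominator has constant coefficient `1`.
-/

section ProdOneSubCMulX

variable {ι R : Type*} [CommRing R]

lemma isUnit_prod_one_sub_C_mul_X (s : Finset ι) (a : ι → R) :
    IsUnit (∏ i ∈ s, (1 - C (a i) * X)) := by
  refine Finset.prod_induction _ IsUnit (fun _ _ => IsUnit.mul) isUnit_one fun i _ => ?_
  simp [isUnit_iff_constantCoeff]

lemma eq_of_mul_prod_one_sub_C_mul_X_eq {s : Finset ι} {a : ι → R} {F G N : R⟦X⟧}
    (hF : F * ∏ i ∈ s, (1 - C (a i) * X) = N) (hG : G * ∏ i ∈ s, (1 - C (a i) * X) = N) :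
    F = G :=
  (isUnit_prod_one_sub_C_mul_X s a).mul_right_cancel (hF.trans hG.symm)

lemma map_mul_prod_one_sub_C_mul_X {S : Type*} [CommRing S] (f : R →+* S) {s : Finset ι}
    {a b : ι → R} {F : R⟦X⟧}
    (h : F * ∏ i ∈ s, (1 - C (a i) * X) = ∏ i ∈ s, (1 - C (b i) * X)) :
    map f F * ∏ i ∈ s, (1 - C (f (a i)) * X) = ∏ i ∈ s, (1 - C (f (b i)) * X) := by
  simpa [map_prod] using congrArg (map f) h

lemma mul_prod_erase_erase_one_sub_C_mul_X [DecidableEq ι] {s : Finset ι} {i j : ι}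
    (hi : i ∈ s) (hj : j ∈ s) (hij : i ≠ j) {a b : ι → R} (hab : a i = b j) (hba : a j = b i)
    {F : R⟦X⟧} (h : F * ∏ k ∈ s, (1 - C (a k) * X) = ∏ k ∈ s, (1 - C (b k) * X)) :
    F * ∏ k ∈ (s.erase i).erase j, (1 - C (a k) * X)
      = ∏ k ∈ (s.erase i).erase j, (1 - C (b k) * X) := by
  have hj' : j ∈ s.erase i := Finset.mem_erase.mpr ⟨hij.symm, hj⟩
  rw [← Finset.mul_prod_erase _ _ hi, ← Finset.mul_prod_erase _ _ hj',
    ← Finset.mul_prod_erase _ (fun k => 1 - C (b k) * X) hi,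
    ← Finset.mul_prod_erase _ (fun k => 1 - C (b k) * X) hj', hab, hba] at h
  refine (isUnit_prod_one_sub_C_mul_X {i, j} b).mul_left_cancel ?_
  rw [Finset.prod_pair hij]
  linear_combination h

end ProdOneSubCMulX

section LaurentPolynomials

variable {n : ℕ}

lemma permAlg_xpow (σ : Equiv.Perm (Fin n)) (i : Fin n) (k : ℤ) :
    permAlg σ (xpow i k) = xpow (σ i) k := by
  simp [permAlg, xpow, AddMonoidAlgebra.domCongr_single]

lemma evalAt_xpow (c : Fin n → ℂˣ) (i : Fin n) (k : ℤ) :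
    evalAt c (xpow i k) = (c i : ℂ) ^ k := by
  simp only [evalAt, xpow, AddMonoidAlgebra.lift_single, evalMonoidHom, MonoidHom.coe_mk,
    OneHom.coe_mk, one_smul]
  rw [Finset.prod_eq_single i (fun j _ hj => by simp [Ne.symm hj])
    (by simp)]
  simp

end LaurentPolynomials

section WheelSeries

variable {n : ℕ} {W : (L n)⟦X⟧}

lemma map_permAlg_eq_self
    (hW : W * ∏ i : Fin n, (1 - C (xpow i 1) * X) = ∏ i : Fin n, (1 - C (xpow i (-1)) * X))
    (σ : Equiv.Perm (Fin n)) :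
    map ((permAlg σ : L n →ₐ[ℂ] L n) : L n →+* L n) W = W := by
  have h := map_mul_prod_one_sub_C_mul_X ((permAlg σ : L n →ₐ[ℂ] L n) : L n →+* L n) hW
  simp only [AlgHom.coe_toRingHom, AlgEquiv.coe_toAlgHom, permAlg_xpow] at h
  rw [Equiv.prod_comp σ (fun i => 1 - C (xpow i 1) * X),
    Equiv.prod_comp σ (fun i => 1 - C (xpow i (-1)) * X)] at h
  exact eq_of_mul_prod_one_sub_C_mul_X_eq h hW

lemma map_evalAt_mul_prod
    (hW : W * ∏ i : Fin n, (1 - C (xpow i 1) * X) = ∏ i : Fin n, (1 - C (xpow i (-1)) * X))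
    (c : Fin n → ℂˣ) :
    map (evalAt c : L n →+* ℂ) W * ∏ i, (1 - C (c i : ℂ) * X) = ∏ i, (1 - C (c i : ℂ)⁻¹ * X) := by
  simpa [evalAt_xpow] using map_mul_prod_one_sub_C_mul_X (evalAt c : L n →+* ℂ) hW

lemma map_evalAt_eq_map_evalAt_update_update_one
    (hW : W * ∏ i : Fin n, (1 - C (xpow i 1) * X) = ∏ i : Fin n, (1 - C (xpow i (-1)) * X))
    {c : Fin n → ℂˣ} {i j : Fin n} (hij : i ≠ j) (hc : c j = (c i)⁻¹) :
    map (evalAt c : L n →+* ℂ) W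
      = map (evalAt (Function.update (Function.update c i 1) j 1) : L n →+* ℂ) W := by
  set c' := Function.update (Function.update c i 1) j 1
  have hc' : ∀ g : ℂˣ → ℂ⟦X⟧, ∏ k ∈ (Finset.univ.erase i).erase j, g (c' k)
      = ∏ k ∈ (Finset.univ.erase i).erase j, g (c k) := fun g =>
    Finset.prod_congr rfl fun k hk => by
      obtain ⟨hkj, hki, -⟩ := Finset.mem_erase.mp hk |>.imp_right Finset.mem_erase.mp
      simp [c', Function.update_of_ne hkj, Function.update_of_ne hki]
  have hcancel := mul_prod_erase_erase_one_sub_C_mul_X (Finset.mem_univ i) (Finset.mem_univ j)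
    hij (by simp [hc]) (by simp [hc]) (map_evalAt_mul_prod hW c)
  have hcancel' := mul_prod_erase_erase_one_sub_C_mul_X (Finset.mem_univ i) (Finset.mem_univ j)
    hij (by simp [c', hij]) (by simp [c', hij]) (map_evalAt_mul_prod hW c')
  rw [hc' (fun u => 1 - C (u : ℂ) * X), hc' (fun u => 1 - C (u : ℂ)⁻¹ * X)] at hcancel'
  exact eq_of_mul_prod_one_sub_C_mul_X_eq hcancel hcancel'

end WheelSeries

/-- The elementary wheel polynomials `w k` (the coefficients of the
power series `W(T) = ∏ (1 - x i⁻¹ T) · (∏ (1 - x i T))⁻¹`, here characterized by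
`W(T) · ∏ (1 - x i T) = ∏ (1 - x i⁻¹ T)`) are symmetric Laurent polynomials and
satisfy the wheel condition. -/
theorem elementary_wheel_polys_symmetric_and_wheel_condition
    (n : ℕ) (hn : 2 ≤ n)
    (W : PowerSeries (L n))
    (hW : W * (∏ i : Fin n, (1 - PowerSeries.C (xpow i 1) * PowerSeries.X))
        = ∏ i : Fin n, (1 - PowerSeries.C (xpow i (-1)) * PowerSeries.X))
    (w : ℕ → L n) (hw : ∀ k, w k = PowerSeries.coeff k W) :
    (∀ k : ℕ, ∀ σ : Equiv.Perm (Fin n), permAlg σ (w k) = w k) ∧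
    (∀ k : ℕ, ∀ c : Fin n → ℂˣ,
      c ⟨1, by omega⟩ = (c ⟨0, by omega⟩)⁻¹ →
      evalAt c (w k)
        = evalAt (Function.update (Function.update c ⟨0, by omega⟩ 1) ⟨1, by omega⟩ 1) (w k)) := by
  refine ⟨fun k σ => ?_, fun k c hc => ?_⟩
  · simpa [hw] using congrArg (coeff k) (map_permAlg_eq_self hW σ)
  · have hne : (⟨0, by omega⟩ : Fin n) ≠ ⟨1, by omega⟩ := Fin.ne_of_val_ne zero_ne_one
    simpa [hw] using congrArg (coeff k) (map_evalAt_eq_map_evalAt_update_update_one hW hne hc)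
end
end

section
/- Let n ≥ 1. In L_n, let e_n = x_1⋯x_n, let w_k be the elementary wheel polynomials (coefficients of W(T) = ∏_{i=1}^n (1 − x_i^{-1}T) · (∏_{i=1}^n (1 − x_i T))^{-1}), and let p_k^- = Σ_{i=1}^n (x_i^k − x_i^{-k}) be the power sum wheel polynomials. Then the ℂ-subalgebra of L_n generated by e_n, e_n^{-1} and all p_k^- (k ≥ 1) equals the ℂ-subalgebra of L_n generated by e_n, e_n^{-1} and all w_k (k ≥ 1). -/
open scoped BigOperators
noncomputable section

/-!
`W(T)` is the quotient `∏ (1 - x_i⁻¹ T) / ∏ (1 - x_i T)`, so its logarithmic derivative is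
`∑_i x_i / (1 - x_i T) - x_i⁻¹ / (1 - x_i⁻¹ T) = ∑_k p_{k+1} T^k`. Comparing coefficients in
`W' = W · ∑_k p_{k+1} T^k` gives the Newton-type identities
`(m + 1) w_{m+1} = ∑_{j ≤ m} w_j p_{m+1-j}` with `w_0 = 1`. Since `m + 1` is invertible in `ℂ`,
these express every `w_k` polynomially in the `p_j` and every `p_k` in the `w_j`.
-/

open PowerSeries Finset

namespace PowerSeries

variable {R : Type*} [CommRing R]

theorem mk_pow_mul_one_sub_C_mul_X (u : R) : (mk (u ^ ·)) * (1 - C u * X) = 1 := by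
  simpa [rescale_mk, rescale_X] using congrArg (rescale u) (mk_one_mul_one_sub_eq_one R)

theorem mk_pow_succ_mul_one_sub_C_mul_X (u : R) :
    (mk fun k => u ^ (k + 1)) * (1 - C u * X) = C u := by
  have : (mk fun k => u ^ (k + 1)) = C u * mk (u ^ ·) := by
    ext k; simp [pow_succ, mul_comm]
  rw [this, mul_assoc, mk_pow_mul_one_sub_C_mul_X, mul_one]

theorem derivative_prod_one_sub_C_mul_X {ι : Type*} [DecidableEq ι] (s : Finset ι) (x : ι → R) :
    d⁄dX R (∏ i ∈ s, (1 - C (x i) * X)) =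
      -(mk fun k => ∑ i ∈ s, x i ^ (k + 1)) * ∏ i ∈ s, (1 - C (x i) * X) := by
  induction s using Finset.induction with
  | empty => ext; simp
  | insert a s ha ih =>
    have hsum : (mk fun k => ∑ i ∈ insert a s, x i ^ (k + 1))
        = (mk fun k => x a ^ (k + 1)) + mk fun k => ∑ i ∈ s, x i ^ (k + 1) := by
      ext k; simp [sum_insert ha]
    rw [prod_insert ha, Derivation.leibniz, ih, hsum, smul_eq_mul, smul_eq_mul, map_sub,
      Derivation.leibniz, derivative_C, derivative_X, derivative_one]
    linear_combination (∏ i ∈ s, (1 - C (x i) * X)) * mk_pow_succ_mul_one_sub_C_mul_X (x a)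

theorem derivative_eq_mul_of_mul_prod_eq_prod {ι : Type*} [Fintype ι] [DecidableEq ι]
    (x y : ι → R) {W : R⟦X⟧}
    (hW : W * ∏ i, (1 - C (x i) * X) = ∏ i, (1 - C (y i) * X)) :
    d⁄dX R W = W * mk fun k => ∑ i, (x i ^ (k + 1) - y i ^ (k + 1)) := by
  have hunit : IsUnit (∏ i, (1 - C (x i) * X)) := by
    simp [isUnit_iff_constantCoeff]
  have hdiff : (mk fun k => ∑ i, (x i ^ (k + 1) - y i ^ (k + 1)))
      = (mk fun k => ∑ i, x i ^ (k + 1)) - mk fun k => ∑ i, y i ^ (k + 1) := by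
    ext k; simp [sum_sub_distrib]
  have hd := congrArg (d⁄dX R) hW
  rw [Derivation.leibniz, smul_eq_mul, smul_eq_mul, derivative_prod_one_sub_C_mul_X,
    derivative_prod_one_sub_C_mul_X, ← hW] at hd
  refine hunit.mul_right_cancel ?_
  rw [hdiff]
  linear_combination hd

theorem coeff_succ_mul_of_derivative_eq_mul {W : R⟦X⟧} {q : ℕ → R}
    (h : d⁄dX R W = W * mk fun k => q (k + 1)) (m : ℕ) :
    coeff (m + 1) W * (m + 1) = ∑ j ∈ range (m + 1), coeff j W * q (m - j + 1) := by
  simpa [coeff_derivative, coeff_mul, Nat.sum_antidiagonal_eq_sum_range_succ_mk]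
    using congrArg (coeff m) h

end PowerSeries

namespace Subalgebra

variable {K A : Type*} [CommRing A] {w q : ℕ → A}

theorem mem_of_newton_recursion_of_left_mem [CommRing K] [Algebra K A] {S : Subalgebra K A}
    (hw0 : w 0 = 1)
    (hrec : ∀ m, w (m + 1) * (m + 1) = ∑ j ∈ range (m + 1), w j * q (m - j + 1))
    (hw : ∀ k, 1 ≤ k → w k ∈ S) : ∀ k, 1 ≤ k → q k ∈ S := by
  intro k
  induction k using Nat.strong_induction_on with
  | _ k ih =>
    obtain _ | m := k
    · simp
    intro _
    have hq : q (m + 1) = w (m + 1) * (m + 1)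
        - ∑ j ∈ range m, w (j + 1) * q (m - (j + 1) + 1) := by
      rw [hrec, sum_range_succ', hw0]
      simp
    rw [hq]
    refine sub_mem (mul_mem (hw _ m.succ_pos) (add_mem (natCast_mem _ m) (one_mem _)))
      (sum_mem fun j hj => mul_mem (hw _ j.succ_pos) (ih _ ?_ (Nat.succ_pos _)))
    have := mem_range.mp hj
    omega

theorem mem_of_newton_recursion_of_right_mem [Field K] [CharZero K] [Algebra K A]
    {S : Subalgebra K A} (hw0 : w 0 = 1)
    (hrec : ∀ m, w (m + 1) * (m + 1) = ∑ j ∈ range (m + 1), w j * q (m - j + 1))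
    (hq : ∀ k, 1 ≤ k → q k ∈ S) (k : ℕ) : w k ∈ S := by
  induction k using Nat.strong_induction_on with
  | _ k ih =>
    obtain _ | m := k
    · simp [hw0]
    have hne : (m + 1 : K) ≠ 0 := Nat.cast_add_one_ne_zero m
    have hw : w (m + 1) = (m + 1 : K)⁻¹ • ∑ j ∈ range (m + 1), w j * q (m - j + 1) := by
      rw [← hrec, eq_inv_smul_iff₀ hne, Algebra.smul_def, mul_comm]
      simp
    rw [hw]
    exact Subalgebra.smul_mem _ (sum_mem fun j hj =>
      mul_mem (ih j (mem_range.mp hj)) (hq _ (Nat.succ_pos _))) _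

end Subalgebra

theorem xpow_pow {n : ℕ} (i : Fin n) (a : ℤ) (m : ℕ) : xpow i a ^ m = xpow i (m * a) := by
  simp [xpow, AddMonoidAlgebra.single_pow, Finsupp.smul_single]

theorem adjoin_powerSums_eq_adjoin_elementary_wheel_general
    (n : ℕ)
    (W : PowerSeries (L n))
    (hW : W * (∏ i : Fin n, (1 - PowerSeries.C (R := L n) (xpow i 1) * PowerSeries.X))
        = ∏ i : Fin n, (1 - PowerSeries.C (R := L n) (xpow i (-1)) * PowerSeries.X))
    (w : ℕ → L n)
    (hw : ∀ k, w k = PowerSeries.coeff (R := L n) k W)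
    (p : ℕ → L n)
    (hp : ∀ k, p k = ∑ i : Fin n, (xpow i (k : ℤ) - xpow i (-(k : ℤ)))) :
    Algebra.adjoin ℂ
        ({∏ i : Fin n, xpow i 1, ∏ i : Fin n, xpow i (-1)} ∪ {y | ∃ k : ℕ, 1 ≤ k ∧ y = p k})
      = Algebra.adjoin ℂ
        ({∏ i : Fin n, xpow i 1, ∏ i : Fin n, xpow i (-1)} ∪ {y | ∃ k : ℕ, 1 ≤ k ∧ y = w k}) := by
  have hlog : d⁄dX (L n) W = W * mk fun k => p (k + 1) := by
    simpa [xpow_pow, hp] using derivative_eq_mul_of_mul_prod_eq_prod _ _ hW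
  have hw0 : w 0 = 1 := by
    simpa [hw, map_prod] using congrArg constantCoeff hW
  have hrec (m : ℕ) : w (m + 1) * (m + 1) = ∑ j ∈ range (m + 1), w j * p (m - j + 1) := by
    simpa only [hw] using coeff_succ_mul_of_derivative_eq_mul hlog m
  apply le_antisymm <;> refine Algebra.adjoin_le ?_ <;> rintro y (hy | ⟨k, hk, rfl⟩)
  · exact Algebra.subset_adjoin (Or.inl hy)
  · exact Subalgebra.mem_of_newton_recursion_of_left_mem hw0 hrec
      (fun k hk => Algebra.subset_adjoin (Or.inr ⟨k, hk, rfl⟩)) k hk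
  · exact Algebra.subset_adjoin (Or.inl hy)
  · exact Subalgebra.mem_of_newton_recursion_of_right_mem hw0 hrec
      (fun k hk => Algebra.subset_adjoin (Or.inr ⟨k, hk, rfl⟩)) k

/-- With `eN = x 1 ⋯ x n`, `eN' = eN⁻¹`, `w k` the elementary wheel
polynomials (coefficients of `W(T) = ∏ (1 - x i⁻¹ T) · (∏ (1 - x i T))⁻¹`) and
`p k = ∑ i (x i ^ k - x i ^ (-k))` the power sum wheel polynomials, the `ℂ`-subalgebra
of `L n` generated by `eN, eN⁻¹` and all `p k` (`k ≥ 1`) equals the one generated by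
`eN, eN⁻¹` and all `w k` (`k ≥ 1`). -/
theorem adjoin_powerSums_eq_adjoin_elementary_wheel
    (n : ℕ) (hn : 1 ≤ n)
    (W : PowerSeries (L n))
    (hW : W * (∏ i : Fin n, (1 - PowerSeries.C (R := L n) (xpow i 1) * PowerSeries.X))
        = ∏ i : Fin n, (1 - PowerSeries.C (R := L n) (xpow i (-1)) * PowerSeries.X))
    (w : ℕ → L n)
    (hw : ∀ k, w k = PowerSeries.coeff (R := L n) k W)
    (p : ℕ → L n)
    (hp : ∀ k, p k = ∑ i : Fin n, (xpow i (k : ℤ) - xpow i (-(k : ℤ)))) :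
    Algebra.adjoin ℂ
        ({∏ i : Fin n, xpow i 1, ∏ i : Fin n, xpow i (-1)} ∪ {y | ∃ k : ℕ, 1 ≤ k ∧ y = p k})
      = Algebra.adjoin ℂ
        ({∏ i : Fin n, xpow i 1, ∏ i : Fin n, xpow i (-1)} ∪ {y | ∃ k : ℕ, 1 ≤ k ∧ y = w k}) :=
  adjoin_powerSums_eq_adjoin_elementary_wheel_general n W hW w hw p hp
end
end

section
/- Young diagrams are determined by their diagonal data: if λ and μ are Young diagrams such that for every integer i the number of cells of λ of content i equals the number of cells of μ of content i (m_λ(i) = m_μ(i) for all i ∈ ℤ), then λ = μ. -/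
/-!
Along the diagonal of content `d` the cells are `(k + max(-d, 0), k + max(d, 0))` for `k : ℕ`,
increasing in `k`. A Young diagram is a lower set, so it meets each diagonal in an initial
segment, whose length is `m_λ(d)`. Hence `(i, j) ∈ λ ↔ min i j < m_λ(j - i)`, and the diagonal
counts determine the diagram.
-/

noncomputable section

/-- The content of a cell `(i, j)` of a Young diagram: `j - i`. -/
def cellContent (c : ℕ × ℕ) : ℤ := (c.2 : ℤ) - (c.1 : ℤ)

/-- `diagCount lam d` is `m_λ(d)`, the number of cells of `lam` of content `d`. -/
def diagCount (lam : YoungDiagram) (d : ℤ) : ℕ :=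
  (lam.cells.filter (fun c => cellContent c = d)).card

theorem Finset.mem_iff_lt_card_of_isLowerSet {s : Finset ℕ} (hs : IsLowerSet (s : Set ℕ))
    {a : ℕ} : a ∈ s ↔ a < s.card := by
  obtain h | ⟨n, h⟩ := hs.eq_univ_or_Iio
  · exact absurd (h ▸ s.finite_toSet) Set.infinite_univ
  · obtain rfl : s = Finset.range n := by
      rw [← Finset.coe_inj, h, Finset.coe_range]
    simp

/-- The `k`-th cell (counted from `0`) on the diagonal of content `d`. -/
def diagCell (d : ℤ) (k : ℕ) : ℕ × ℕ := (k + (-d).toNat, k + d.toNat)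

theorem diagCell_injective (d : ℤ) : Function.Injective (diagCell d) := by
  intro k l h
  simpa [diagCell] using congrArg Prod.fst h

theorem monotone_diagCell (d : ℤ) : Monotone (diagCell d) :=
  fun _ _ hkl => ⟨Nat.add_le_add_right hkl _, Nat.add_le_add_right hkl _⟩

theorem diagCell_cellContent (c : ℕ × ℕ) : diagCell (cellContent c) (min c.1 c.2) = c := by
  obtain ⟨i, j⟩ := c
  simp only [diagCell, cellContent, Prod.mk.injEq]
  omega

theorem cellContent_diagCell (d : ℤ) (k : ℕ) : cellContent (diagCell d k) = d := by
  simp only [diagCell, cellContent]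
  omega

theorem range_diagCell (d : ℤ) : Set.range (diagCell d) = {c | cellContent c = d} := by
  ext c
  constructor
  · rintro ⟨k, rfl⟩
    exact cellContent_diagCell d k
  · rintro rfl
    exact ⟨_, diagCell_cellContent c⟩

namespace YoungDiagram

def diagIndices (lam : YoungDiagram) (d : ℤ) : Finset ℕ :=
  lam.cells.preimage (diagCell d) (diagCell_injective d).injOn

variable {lam : YoungDiagram} {d : ℤ} {k : ℕ}

theorem mem_diagIndices : k ∈ lam.diagIndices d ↔ diagCell d k ∈ lam := by
  rw [diagIndices, Finset.mem_preimage, mem_cells]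

theorem isLowerSet_diagIndices : IsLowerSet (lam.diagIndices d : Set ℕ) := by
  intro l k hkl hl
  rw [Finset.mem_coe, mem_diagIndices] at hl ⊢
  exact lam.isLowerSet (monotone_diagCell d hkl) hl

theorem card_diagIndices : (lam.diagIndices d).card = diagCount lam d := by
  classical
  rw [diagIndices, Finset.card_preimage, diagCount]
  congr 1
  exact Finset.filter_congr fun c _ => by rw [range_diagCell]; rfl

theorem diagCell_mem_iff_lt_diagCount : diagCell d k ∈ lam ↔ k < diagCount lam d := by
  rw [← mem_diagIndices, ← card_diagIndices,
    Finset.mem_iff_lt_card_of_isLowerSet isLowerSet_diagIndices]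

theorem mem_iff_min_lt_diagCount (c : ℕ × ℕ) :
    c ∈ lam ↔ min c.1 c.2 < diagCount lam (cellContent c) := by
  conv_lhs => rw [← diagCell_cellContent c]
  exact diagCell_mem_iff_lt_diagCount

end YoungDiagram

/-- Young diagrams are determined by their diagonal data: if
`m_λ(i) = m_μ(i)` for all `i ∈ ℤ`, then `λ = μ`. -/
theorem youngDiagram_eq_of_diagCount_eq
    (lam mu : YoungDiagram) (h : ∀ d : ℤ, diagCount lam d = diagCount mu d) :
    lam = mu := by
  ext c
  simp only [YoungDiagram.mem_cells, YoungDiagram.mem_iff_min_lt_diagCount, h]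
end
end

section
/- Let q, t be nonzero complex numbers such that q is not a root of unity and t ≠ q^a and t ≠ −q^a for every integer a. Then the map λ ↦ W(λ,q,t) from Young diagrams to rational functions is injective: if λ and μ are Young diagrams with W(λ,q,t) = W(μ,q,t), then λ = μ. -/
noncomputable section

/-- The rational function
`W(λ,q,t) = ∏_{c∈λ}(1 − t⁻¹q^{−2·ct(c)}T) / ∏_{c∈λ}(1 − t·q^{2·ct(c)}T) ∈ RatFunc ℂ`. -/
def WFun (q t : ℂˣ) (lam : YoungDiagram) : RatFunc ℂ :=
  (∏ c ∈ lam.cells,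
      (1 - RatFunc.C ((t : ℂ)⁻¹ * (q : ℂ) ^ (-2 * cellContent c)) * RatFunc.X)) /
  (∏ c ∈ lam.cells,
      (1 - RatFunc.C ((t : ℂ) * (q : ℂ) ^ (2 * cellContent c)) * RatFunc.X))

/-!
With `a_d = t q^{2d}`, `W(λ,q,t) = ∏_{c∈λ} (1 - a_{ct(c)}⁻¹ T) / ∏_{c∈λ} (1 - a_{ct(c)} T)`
has zeros the numbers `a_{ct(c)}` and poles their inverses. Since `t ≠ ±q^a`, no `a_d` is the
inverse of an `a_e`, so nothing cancels and `W(λ,q,t)` determines the multiset of the `a_{ct(c)}`.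
As `q` has infinite order, `d ↦ a_d` is injective, so `W(λ,q,t)` determines the number of cells
of `λ` on each diagonal. The cells of a Young diagram on a diagonal form an initial segment of
it, so these numbers determine `λ`.
-/

open Function Polynomial

namespace Multiset

variable {α : Type*} [InvolutiveInv α] [DecidableEq α]

theorem eq_of_add_map_inv_eq_add_map_inv {s t : Multiset α} (hinv : ∀ x ∈ s + t, x⁻¹ ∉ s + t)
    (h : s + t.map (·⁻¹) = t + s.map (·⁻¹)) : s = t := by
  ext x
  have hx := congrArg (count x) h
  rw [count_add, count_add, ← inv_inv x, count_map_eq_count' _ _ inv_injective,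
    count_map_eq_count' _ _ inv_injective, inv_inv] at hx
  by_cases hmem : x ∈ s + t
  · have hinv_mem := mem_add.not.mp (hinv x hmem)
    rwa [count_eq_zero.mpr (not_or.mp hinv_mem).1, count_eq_zero.mpr (not_or.mp hinv_mem).2,
      add_zero, add_zero] at hx
  · obtain ⟨hs, ht⟩ := not_or.mp (mem_add.not.mp hmem)
    rw [count_eq_zero.mpr hs, count_eq_zero.mpr ht]

end Multiset

namespace Polynomial

variable {K : Type*} [Field K]

def oneSubProd (s : Multiset K) : K[X] := (s.map fun a => 1 - C a * X).prod

theorem oneSubProd_ne_zero (s : Multiset K) : oneSubProd s ≠ 0 := by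
  refine Multiset.prod_ne_zero fun h0 => ?_
  obtain ⟨a, -, ha⟩ := Multiset.mem_map.mp h0
  simpa using congrArg (coeff · 0) ha

theorem roots_one_sub_C_mul_X {a : K} (ha : a ≠ 0) : (1 - C a * X).roots = {a⁻¹} := by
  rw [show (1 - C a * X : K[X]) = C (-a) * X + C 1 by rw [C_neg, C_1]; ring,
    roots_C_mul_X_add_C _ (neg_ne_zero.mpr ha)]
  simp

theorem roots_oneSubProd {s : Multiset K} (hs : 0 ∉ s) : (oneSubProd s).roots = s.map (·⁻¹) := by
  rw [oneSubProd, roots_multiset_prod _ (mt Multiset.prod_eq_zero (oneSubProd_ne_zero s)),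
    Multiset.bind_map,
    Multiset.bind_congr fun a ha => roots_one_sub_C_mul_X (ne_of_mem_of_not_mem ha hs),
    Multiset.bind_singleton]

end Polynomial

section ZeroPoleRatio

variable {K : Type*} [Field K]

def zeroPoleRatio (s : Multiset K) : RatFunc K :=
  algebraMap K[X] (RatFunc K) (oneSubProd (s.map (·⁻¹))) /
    algebraMap K[X] (RatFunc K) (oneSubProd s)

theorem eq_of_zeroPoleRatio_eq {s t : Multiset K} (hinv : ∀ x ∈ s + t, x⁻¹ ∉ s + t)
    (h : zeroPoleRatio s = zeroPoleRatio t) : s = t := by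
  classical
  -- `0⁻¹ = 0`, so `hinv` also keeps `0` out of `s + t`.
  have h0 : (0 : K) ∉ s + t := fun h0 => hinv 0 h0 (by rwa [inv_zero])
  have hs : 0 ∉ s := fun h => h0 (Multiset.mem_add.mpr (.inl h))
  have ht : 0 ∉ t := fun h => h0 (Multiset.mem_add.mpr (.inr h))
  have hs' : 0 ∉ s.map (·⁻¹) := by simpa using hs
  have ht' : 0 ∉ t.map (·⁻¹) := by simpa using ht
  rw [zeroPoleRatio, zeroPoleRatio,
    div_eq_div_iff (RatFunc.algebraMap_ne_zero (oneSubProd_ne_zero _))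
      (RatFunc.algebraMap_ne_zero (oneSubProd_ne_zero _)), ← map_mul, ← map_mul] at h
  have hroots := congrArg roots (RatFunc.algebraMap_injective K h)
  rw [roots_mul (mul_ne_zero (oneSubProd_ne_zero _) (oneSubProd_ne_zero _)),
    roots_mul (mul_ne_zero (oneSubProd_ne_zero _) (oneSubProd_ne_zero _)),
    roots_oneSubProd hs, roots_oneSubProd ht, roots_oneSubProd hs', roots_oneSubProd ht'] at hroots
  simp only [Multiset.map_map, comp_def, inv_inv, Multiset.map_id'] at hroots
  exact Multiset.eq_of_add_map_inv_eq_add_map_inv hinv hroots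

end ZeroPoleRatio

theorem injective_mul_zpow_two_mul {G : Type*} [Group G] (t : G) {q : G} (hq : ¬IsOfFinOrder q) :
    Injective fun d : ℤ => t * q ^ (2 * d) :=
  (mul_right_injective t).comp
    ((injective_zpow_iff_not_isOfFinOrder.mpr hq).comp (mul_right_injective₀ two_ne_zero))

theorem mul_zpow_two_mul_mul_ne_one {R : Type*} [CommRing R] [NoZeroDivisors R] {q t : Rˣ}
    (ht : ∀ a : ℤ, t ≠ q ^ a ∧ t ≠ -(q ^ a)) (d e : ℤ) :
    t * q ^ (2 * d) * (t * q ^ (2 * e)) ≠ 1 := by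
  intro h
  have hsq : ((t * q ^ (d + e) : Rˣ) : R) * (t * q ^ (d + e) : Rˣ) = 1 := by
    rw [← Units.val_mul, ← Units.val_one, ← h]
    congr 1
    rw [mul_mul_mul_comm t (q ^ (d + e)), mul_mul_mul_comm t (q ^ (2 * d)), ← zpow_add,
      ← zpow_add]
    congr 2
    ring
  rcases mul_self_eq_one_iff.mp hsq with h1 | h1
  · refine (ht (-(d + e))).1 ?_
    rw [zpow_neg, eq_inv_iff_mul_eq_one]
    exact Units.val_eq_one.mp h1
  · refine (ht (-(d + e))).2 ?_
    rw [zpow_neg, ← neg_one_mul, eq_mul_inv_iff_mul_eq]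
    exact Units.val_eq_neg_one.mp h1

namespace YoungDiagram

def contents (μ : YoungDiagram) : Multiset ℤ := μ.cells.val.map cellContent

theorem diagCount_eq_count_contents (μ : YoungDiagram) (d : ℤ) :
    diagCount μ d = μ.contents.count d := by
  rw [contents, Multiset.count_map, diagCount, Finset.card_def, Finset.filter_val]
  simp only [eq_comm]

variable {μ ν : YoungDiagram} {i j : ℕ}

theorem min_lt_diagCount_of_mem (h : (i, j) ∈ μ) : min i j < diagCount μ (j - i) := by
  have : (Finset.range (min i j + 1)).card ≤ diagCount μ (j - i) := by
    refine Finset.card_le_card_of_injOn (fun s => (i - s, j - s)) (fun s hs => ?_) ?_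
    · rw [Finset.mem_coe, Finset.mem_range] at hs
      rw [Finset.mem_coe, Finset.mem_filter, mem_cells, cellContent]
      dsimp only
      refine ⟨μ.up_left_mem (Nat.sub_le _ _) (Nat.sub_le _ _) h, ?_⟩
      omega
    · intro s hs s' hs' hss'
      simp only [Finset.coe_range, Set.mem_Iio, Prod.mk.injEq] at hs hs' hss'
      omega
  simpa using this

theorem diagCount_le_min_of_not_mem (h : (i, j) ∉ μ) : diagCount μ (j - i) ≤ min i j := by
  have : diagCount μ (j - i) ≤ (Finset.range (min i j)).card := by
    refine Finset.card_le_card_of_injOn (fun c => min c.1 c.2) (fun ⟨a, b⟩ hab => ?_) ?_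
    · rw [Finset.mem_coe, Finset.mem_filter, mem_cells, cellContent] at hab
      have : ¬(i ≤ a ∧ j ≤ b) := fun hle => h (μ.up_left_mem hle.1 hle.2 hab.1)
      rw [Finset.mem_coe, Finset.mem_range]
      dsimp only
      omega
    · rintro ⟨a, b⟩ hab ⟨a', b'⟩ hab' hmin
      have hd := (Finset.mem_filter.mp hab).2
      have hd' := (Finset.mem_filter.mp hab').2
      simp only [cellContent] at hd hd' hmin
      rw [Prod.mk.injEq]
      omega
  simpa using this

theorem mem_iff_min_lt_diagCount_s8 : (i, j) ∈ μ ↔ min i j < diagCount μ (j - i) :=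
  ⟨min_lt_diagCount_of_mem,
    fun h => by_contra fun hn => (diagCount_le_min_of_not_mem hn).not_gt h⟩

theorem eq_of_contents_eq (h : μ.contents = ν.contents) : μ = ν := by
  ext ⟨i, j⟩
  simp only [mem_cells, mem_iff_min_lt_diagCount_s8, diagCount_eq_count_contents, h]

end YoungDiagram

theorem WFun_eq_zeroPoleRatio (q t : ℂˣ) (μ : YoungDiagram) :
    WFun q t μ = zeroPoleRatio (μ.contents.map fun d => ((t * q ^ (2 * d) : ℂˣ) : ℂ)) := by
  simp only [WFun, zeroPoleRatio, oneSubProd, map_multiset_prod, Finset.prod_eq_multiset_prod,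
    YoungDiagram.contents, Multiset.map_map, comp_def, map_sub, map_one, map_mul,
    RatFunc.algebraMap_C, RatFunc.algebraMap_X]
  push_cast
  simp only [mul_inv, ← zpow_neg, neg_mul, map_mul]

/-- For `q` not a root of unity and `t ≠ ±q^a` for all integers `a`,
the map `λ ↦ W(λ,q,t)` from Young diagrams to rational functions is injective. -/
theorem WFun_injective_of_generic
    (q t : ℂˣ)
    (hq : ∀ k : ℕ, 0 < k → q ^ k ≠ 1)
    (ht : ∀ a : ℤ, t ≠ q ^ a ∧ t ≠ -(q ^ a)) :
    ∀ lam mu : YoungDiagram, WFun q t lam = WFun q t mu → lam = mu := by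
  intro lam mu h
  have hinj : Injective fun d : ℤ => ((t * q ^ (2 * d) : ℂˣ) : ℂ) :=
    Units.val_injective.comp
      (injective_mul_zpow_two_mul t (by simpa [isOfFinOrder_iff_pow_eq_one] using hq))
  rw [WFun_eq_zeroPoleRatio, WFun_eq_zeroPoleRatio] at h
  refine YoungDiagram.eq_of_contents_eq (Multiset.map_injective hinj (eq_of_zeroPoleRatio_eq ?_ h))
  simp only [← Multiset.map_add, Multiset.mem_map]
  rintro _ ⟨d, -, rfl⟩ ⟨e, -, he⟩
  refine mul_zpow_two_mul_mul_ne_one ht d e (Units.ext ?_)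
  rw [Units.val_mul, he, Units.val_one, mul_inv_cancel₀ (Units.ne_zero _)]
end
end

section
/- Let n ≥ 4 and let q be a nonzero complex number, and set t = q. Then the Young diagrams of the partitions (n−2, 2) and (n−2) satisfy W((n−2,2), q, q) = W((n−2), q, q). In particular, for t = q the function λ ↦ W(λ,q,t) does not separate the pair of distinct partitions (n−2,2) and (n−2) of n and n−2. -/
/-! The diagram `(n−2, 2)` is the row `(n−2)` plus the cells `(1,0)` and `(1,1)`, of contents
`−1` and `0`. For `t = q` these two cells contribute the factor `(1 − qT)(1 − q⁻¹T)` to both the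
numerator and the denominator of `W`, so it cancels. -/

noncomputable section

lemma RatFunc.one_sub_C_mul_X_ne_zero {K : Type*} [Field K] (a : K) :
    (1 : RatFunc K) - RatFunc.C a * RatFunc.X ≠ 0 := by
  have hpoly : (1 : Polynomial K) - Polynomial.C a * Polynomial.X ≠ 0 := fun h => by
    simpa using congrArg (Polynomial.coeff · 0) h
  simpa [RatFunc.algebraMap_C, RatFunc.algebraMap_X] using RatFunc.algebraMap_ne_zero hpoly

/-- Under `hab` the numerator factor of each of the cells `a`, `b` is the denominator factor
of the other. -/
theorem WFun_eq_of_cells_eq_insert_insert {q t : ℂˣ} {lam mu : YoungDiagram} {a b : ℕ × ℕ}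
    (hcells : lam.cells = insert a (insert b mu.cells)) (hne : a ≠ b) (ha : a ∉ mu.cells)
    (hb : b ∉ mu.cells) (hab : (t : ℂ) ^ 2 * (q : ℂ) ^ (2 * (cellContent a + cellContent b)) = 1) :
    WFun q t lam = WFun q t mu := by
  have hq : (q : ℂ) ≠ 0 := q.ne_zero
  have num_eq_den : ∀ {x y : ℕ × ℕ}, cellContent x + cellContent y = cellContent a + cellContent b →
      (t : ℂ)⁻¹ * (q : ℂ) ^ (-2 * cellContent x) = t * (q : ℂ) ^ (2 * cellContent y) := by
    intro x y hxy
    rw [← hxy, mul_add, zpow_add₀ hq] at hab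
    rw [neg_mul, zpow_neg]
    field_simp
    linear_combination -hab
  have ha' : a ∉ insert b mu.cells := by simp [hne, ha]
  unfold WFun
  rw [hcells, Finset.prod_insert ha', Finset.prod_insert hb, Finset.prod_insert ha',
    Finset.prod_insert hb, num_eq_den rfl, num_eq_den (add_comm _ _), mul_left_comm,
    mul_div_mul_left _ _ (RatFunc.one_sub_C_mul_X_ne_zero _),
    mul_div_mul_left _ _ (RatFunc.one_sub_C_mul_X_ne_zero _)]

theorem YoungDiagram.cells_ofRowLens_concat_two (m : ℕ) (hw : [m, 2].SortedGE)
    (hw' : [m].SortedGE) :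
    (YoungDiagram.ofRowLens [m, 2] hw).cells =
      insert (1, 0) (insert (1, 1) (YoungDiagram.ofRowLens [m] hw').cells) := by
  ext ⟨i, j⟩
  simp only [Finset.mem_insert, YoungDiagram.mem_cells, YoungDiagram.mem_ofRowLens,
    Prod.mk.injEq]
  rcases i with _ | _ | i <;> simp
  omega

/-- For `n ≥ 4` and `t = q`, the Young diagrams of the partitions
`(n−2, 2)` and `(n−2)` have the same `W`-function, although they are distinct. -/
theorem WFun_not_injective_t_eq_q
    (n : ℕ) (hn : 4 ≤ n) (q : ℂˣ) :
    let lam := YoungDiagram.ofRowLens [n - 2, 2] (by simp [List.sortedGE_iff_pairwise]; omega)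
    let mu := YoungDiagram.ofRowLens [n - 2] (by simp [List.sortedGE_iff_pairwise])
    WFun q q lam = WFun q q mu ∧ lam ≠ mu := by
  intro lam mu
  have hcells : lam.cells = insert (1, 0) (insert (1, 1) mu.cells) :=
    YoungDiagram.cells_ofRowLens_concat_two _ _ _
  have h10 : ((1, 0) : ℕ × ℕ) ∉ mu.cells := by simp [mu, YoungDiagram.mem_ofRowLens]
  have h11 : ((1, 1) : ℕ × ℕ) ∉ mu.cells := by simp [mu, YoungDiagram.mem_ofRowLens]
  refine ⟨WFun_eq_of_cells_eq_insert_insert hcells (by simp) h10 h11 ?_, fun h => ?_⟩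
  · simp [cellContent, zpow_neg, zpow_ofNat, q.ne_zero]
  · exact h10 (h ▸ hcells ▸ Finset.mem_insert_self _ _)
end
end
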